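/- arXiv:1911.00395 — 2 statements merged into one kernel-verified Lean document; each statement's English description precedes it below -/
import Mathlib

section
/- If in addition there exist C, ε > 0 such that p(s) ≤ C e^{−εs} for all s ≥ 0, then there exist δ > 0 and C′ > 0 such that v(t) ≤ C′ e^{(1−δ)t} for all t ≥ 0, and consequently there is a constant C″ such that V(t) ≥ δt − C″ for all t ≥ 0. -/
open MeasureTheory Filter Set Topology

/-- Modified Bessel function of the first kind `I₁`, defined by its power series. -/
noncomputable def besselI1 (z : ℝ) : ℝ :=
  ∑' k : ℕ, (1 / ((Nat.factorial k : ℝ) * (Nat.factorial (k + 1) : ℝ))) * (z / 2) ^ (2 * k + 1)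

/-- `v(t) = ∫₀^∞ p(s) e^{-s} √(t/s) I₁(2√(st)) ds`. -/
noncomputable def vFun (p : ℝ → ℝ) (t : ℝ) : ℝ :=
  ∫ s in Set.Ioi (0 : ℝ), p s * Real.exp (-s) * Real.sqrt (t / s) * besselI1 (2 * Real.sqrt (s * t))

/-
The kernel is controlled by the crude bound `I₁(z) ≤ (z/2) eᶻ`, which follows termwise from
`(2k)! ≤ 4ᵏ k! (k+1)!`. Hence `√(t/s) I₁(2√(st)) ≤ t e^{2√(st)}`, and by AM–GM with weight
`α = 1 + ε/2`, `2√(st) ≤ α s + t/α`. The factor `e^{αs}` is absorbed by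
`p(s) e^{-s} ≤ C e^{-(1+ε)s}`, leaving the integrable `e^{-εs/2}`, so `v(t) ≤ (2C/ε) t e^{t/α}`.
Since `1/α < 1`, the polynomial factor `t` is swallowed by `e^{δt}` for `δ = (1 - 1/α)/2`, and
taking logarithms gives the lower bound on `V`.
-/

open Real
open scoped Nat

theorem Nat.factorial_two_mul_le_four_pow_mul (n : ℕ) :
    (2 * n)! ≤ 4 ^ n * (n ! * (n + 1)!) := by
  have h := Nat.choose_mul_factorial_mul_factorial (Nat.le_mul_of_pos_left n two_pos)
  rw [show 2 * n - n = n by omega, ← Nat.centralBinom_eq_two_mul_choose] at h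
  rw [← h, mul_assoc]
  exact Nat.mul_le_mul (Nat.centralBinom_le_four_pow n)
    (Nat.mul_le_mul_left _ (Nat.factorial_le n.le_succ))

noncomputable def besselI1Term (z : ℝ) (k : ℕ) : ℝ :=
  (1 / ((k ! : ℝ) * ((k + 1)! : ℝ))) * (z / 2) ^ (2 * k + 1)

section besselI1

variable {z : ℝ}

theorem besselI1Term_nonneg (hz : 0 ≤ z) (k : ℕ) : 0 ≤ besselI1Term z k := by
  unfold besselI1Term
  positivity

theorem besselI1Term_le (hz : 0 ≤ z) (k : ℕ) :
    besselI1Term z k ≤ z / 2 * (z ^ (2 * k) / (2 * k)!) := by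
  have hfact : ((2 * k)! : ℝ) ≤ 4 ^ k * ((k ! : ℝ) * ((k + 1)! : ℝ)) := by
    exact_mod_cast Nat.factorial_two_mul_le_four_pow_mul k
  have hterm :
      besselI1Term z k = z / 2 * z ^ (2 * k) / (4 ^ k * ((k ! : ℝ) * ((k + 1)! : ℝ))) := by
    rw [besselI1Term, pow_succ', div_pow, pow_mul, pow_mul]
    norm_num
    ring
  rw [hterm, ← mul_div_assoc]
  gcongr

theorem summable_besselI1Term (hz : 0 ≤ z) : Summable (besselI1Term z) :=
  (((Real.summable_pow_div_factorial z).mul_left (z / 2)).comp_injective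
    (mul_right_injective₀ two_ne_zero)).of_nonneg_of_le
      (besselI1Term_nonneg hz) (besselI1Term_le hz)

theorem besselI1_nonneg (hz : 0 ≤ z) : 0 ≤ besselI1 z :=
  tsum_nonneg (besselI1Term_nonneg hz)

theorem besselI1_le_mul_exp (hz : 0 ≤ z) : besselI1 z ≤ z / 2 * exp z := by
  rw [exp_eq_exp_ℝ, NormedSpace.exp_eq_tsum_div, ← tsum_mul_left]
  exact (summable_besselI1Term hz).tsum_le_tsum_of_inj (2 * ·) (mul_right_injective₀ two_ne_zero)
    (fun _ _ => by positivity) (besselI1Term_le hz)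
    ((Real.summable_pow_div_factorial z).mul_left _)

end besselI1

theorem two_mul_sqrt_mul_le {α s t : ℝ} (hα : 0 < α) (hs : 0 ≤ s) (ht : 0 ≤ t) :
    2 * √(s * t) ≤ α * s + t / α := by
  have hsqrt : √(α * s) * √(t / α) = √(s * t) := by
    rw [← sqrt_mul (by positivity)]
    congr 1
    field_simp
  have h := two_mul_le_add_sq (√(α * s)) (√(t / α))
  rwa [mul_assoc, hsqrt, sq_sqrt (by positivity), sq_sqrt (by positivity)] at h

theorem sqrt_div_mul_besselI1_le {s t : ℝ} (hs : 0 < s) (ht : 0 ≤ t) :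
    √(t / s) * besselI1 (2 * √(s * t)) ≤ t * exp (2 * √(s * t)) := by
  have hsqrt : √(t / s) * √(s * t) = t := by
    rw [← sqrt_mul (by positivity), div_mul_eq_mul_div, mul_div_assoc,
      mul_div_cancel_left₀ _ hs.ne', sqrt_mul_self ht]
  calc √(t / s) * besselI1 (2 * √(s * t)) ≤ √(t / s) * (√(s * t) * exp (2 * √(s * t))) := by
        gcongr
        simpa using besselI1_le_mul_exp (z := 2 * √(s * t)) (by positivity)
    _ = t * exp (2 * √(s * t)) := by rw [← mul_assoc, hsqrt]

theorem integral_exp_neg_mul_Ioi_zero {a : ℝ} (ha : 0 < a) :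
    ∫ s in Ioi (0 : ℝ), exp (-a * s) = 1 / a := by
  rw [integral_exp_mul_Ioi (neg_lt_zero.2 ha)]
  field_simp
  simp

theorem self_le_exp_mul_div {δ : ℝ} (hδ : 0 < δ) (t : ℝ) : t ≤ exp (δ * t) / δ := by
  rw [le_div_iff₀ hδ]
  linarith [add_one_le_exp (δ * t)]

section vFun

variable {p : ℝ → ℝ} {C ε : ℝ}

theorem vFun_integrand_nonneg (hpos : ∀ s, 0 ≤ s → 0 ≤ p s) {s : ℝ} (hs : 0 < s) (t : ℝ) :
    0 ≤ p s * exp (-s) * √(t / s) * besselI1 (2 * √(s * t)) :=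
  mul_nonneg (by have := hpos s hs.le; positivity) (besselI1_nonneg (by positivity))

theorem vFun_nonneg (hpos : ∀ s, 0 ≤ s → 0 ≤ p s) (t : ℝ) : 0 ≤ vFun p t :=
  setIntegral_nonneg measurableSet_Ioi fun _ hs => vFun_integrand_nonneg hpos hs t

theorem vFun_le (hpos : ∀ s, 0 ≤ s → 0 ≤ p s) (hε : 0 < ε)
    (hbound : ∀ s, 0 ≤ s → p s ≤ C * exp (-ε * s)) {t : ℝ} (ht : 0 ≤ t) :
    vFun p t ≤ 2 * C / ε * t * exp (t / (1 + ε / 2)) := by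
  set α := 1 + ε / 2
  have hα0 : 0 < α := by positivity
  have hintegrand : ∀ s ∈ Ioi (0 : ℝ),
      p s * exp (-s) * √(t / s) * besselI1 (2 * √(s * t))
        ≤ C * t * exp (t / α) * exp (-(ε / 2) * s) := by
    intro s (hs : 0 < s)
    have hC : 0 ≤ C :=
      nonneg_of_mul_nonneg_left ((hpos s hs.le).trans (hbound s hs.le)) (exp_pos _)
    calc p s * exp (-s) * √(t / s) * besselI1 (2 * √(s * t))
        = p s * exp (-s) * (√(t / s) * besselI1 (2 * √(s * t))) := by ring
      _ ≤ C * exp (-ε * s) * exp (-s) * (t * exp (α * s + t / α)) := by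
          have hkernel := (sqrt_div_mul_besselI1_le hs ht).trans
            (mul_le_mul_of_nonneg_left (exp_le_exp.2 (two_mul_sqrt_mul_le hα0 hs.le ht)) ht)
          have hp := hbound s hs.le
          have hI := besselI1_nonneg (z := 2 * √(s * t)) (by positivity)
          gcongr
      _ = C * t * exp (t / α) * exp (-(ε / 2) * s) := by
          have hexp : exp (-ε * s) * exp (-s) * exp (α * s + t / α)
              = exp (t / α) * exp (-(ε / 2) * s) := by
            rw [← exp_add, ← exp_add, ← exp_add]
            congr 1
            ring
          linear_combination (C * t) * hexp
  calc vFun p t ≤ ∫ s in Ioi (0 : ℝ), C * t * exp (t / α) * exp (-(ε / 2) * s) :=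
        setIntegral_mono_of_nonneg (fun _ hs => vFun_integrand_nonneg hpos hs t) hintegrand
          ((exp_neg_integrableOn_Ioi 0 (half_pos hε)).const_mul _)
    _ = 2 * C / ε * t * exp (t / α) := by
        rw [integral_const_mul, integral_exp_neg_mul_Ioi_zero (half_pos hε)]
        field_simp

theorem exists_vFun_le_mul_exp (hpos : ∀ s, 0 ≤ s → 0 ≤ p s) (hC : 0 < C) (hε : 0 < ε)
    (hbound : ∀ s, 0 ≤ s → p s ≤ C * exp (-ε * s)) :
    ∃ δ ∈ Ioo (0 : ℝ) 1, ∃ C' > (0 : ℝ), ∀ t, 0 ≤ t → vFun p t ≤ C' * exp ((1 - δ) * t) := by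
  set α := 1 + ε / 2
  have hα_inv : α⁻¹ < 1 := inv_lt_one_of_one_lt₀ (by simp [α, hε])
  set δ := (1 - α⁻¹) / 2 with hδ
  have hδ0 : 0 < δ := by simp only [hδ]; linarith
  refine ⟨δ, ⟨hδ0, by simp only [hδ]; linarith [inv_pos.2 (show 0 < α by positivity)]⟩,
    2 * C / ε / δ, by positivity, fun t ht => ?_⟩
  calc vFun p t ≤ 2 * C / ε * t * exp (t / α) := vFun_le hpos hε hbound ht
    _ ≤ 2 * C / ε * (exp (δ * t) / δ) * exp (t / α) := by
        gcongr
        exact self_le_exp_mul_div hδ0 t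
    _ = 2 * C / ε / δ * exp ((1 - δ) * t) := by
        have hexp : exp (δ * t) * exp (t / α) = exp ((1 - δ) * t) := by
          rw [← exp_add, hδ]
          ring_nf
        rw [← hexp]
        ring

end vFun

theorem log_one_add_le_of_le_mul_exp {v C' x : ℝ} (hv : 0 ≤ v) (hC' : 0 ≤ C')
    (h : v ≤ C' * exp x) (hx : 0 ≤ x) : log (1 + v) ≤ log (1 + C') + x := by
  have hexp : 1 ≤ exp x := one_le_exp hx
  calc log (1 + v) ≤ log ((1 + C') * exp x) := log_le_log (by linarith) (by nlinarith)
    _ = log (1 + C') + x := by rw [log_mul (by positivity) (exp_pos x).ne', log_exp]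

theorem stmt2_general (p : ℝ → ℝ) (hpos : ∀ s, 0 ≤ s → 0 ≤ p s)
    (C ε : ℝ) (hC : 0 < C) (hε : 0 < ε)
    (hbound : ∀ s, 0 ≤ s → p s ≤ C * Real.exp (-ε * s)) :
    ∃ δ > (0 : ℝ),
      (∃ C' > (0 : ℝ), ∀ t, 0 ≤ t → vFun p t ≤ C' * Real.exp ((1 - δ) * t)) ∧
      (∃ C'' : ℝ, ∀ t, 0 ≤ t → δ * t - C'' ≤ t - Real.log (1 + vFun p t)) := by
  obtain ⟨δ, ⟨hδ0, hδ1⟩, C', hC', hv⟩ := exists_vFun_le_mul_exp hpos hC hε hbound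
  refine ⟨δ, hδ0, ⟨C', hC', hv⟩, log (1 + C'), fun t ht => ?_⟩
  have := log_one_add_le_of_le_mul_exp (vFun_nonneg hpos t) hC'.le (hv t ht)
    (mul_nonneg (sub_nonneg.2 hδ1.le) ht)
  linarith

theorem stmt2 (p : ℝ → ℝ) (hmeas : Measurable p) (hpos : ∀ s, 0 ≤ s → 0 ≤ p s)
    (C ε : ℝ) (hC : 0 < C) (hε : 0 < ε)
    (hbound : ∀ s, 0 ≤ s → p s ≤ C * Real.exp (-ε * s)) :
    ∃ δ > (0 : ℝ),
      (∃ C' > (0 : ℝ), ∀ t, 0 ≤ t → vFun p t ≤ C' * Real.exp ((1 - δ) * t)) ∧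
      (∃ C'' : ℝ, ∀ t, 0 ≤ t → δ * t - C'' ≤ t - Real.log (1 + vFun p t)) :=
  stmt2_general p hpos C ε hC hε hbound
end

section
/- The function v extends to a real-analytic function at 0 with v(0) = 0, v′(0) = M₀, v″(0) = M₁, and more generally v^{(k)}(0) = M_{k−1}/(k−1)! for all k ≥ 1; consequently V extends real-analytically to a neighbourhood of 0 with V(0) = 0, V′(0) = 1 − M₀, V″(0) = M₀² − M₁, and V‴(0) = −(1/2)M₂ + 3M₁M₀ − 2M₀³. Moreover, with V_ε the effective potential obtained by replacing p(s) with p(s)e^{−εs}, the derivative of ε ↦ V_ε′(0) at ε = 0 equals M₁. -/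
open MeasureTheory Filter Set Topology

/-- The moments `M_k = ∫₀^∞ p(s) e^{-s} s^k ds`. -/
noncomputable def moment (p : ℝ → ℝ) (k : ℕ) : ℝ :=
  ∫ s in Set.Ioi (0 : ℝ), p s * Real.exp (-s) * s ^ k

/-- The effective potential `V(t) = t - log(1 + v(t))`. -/
noncomputable def VFun (p : ℝ → ℝ) (t : ℝ) : ℝ :=
  t - Real.log (1 + vFun p t)

/-!
Expanding `I₁` termwise, `√(t/s) I₁(2√(st)) = ∑ₖ sᵏ tᵏ⁺¹ / (k! (k+1)!)`, and since
`e^{-s} sᵏ ≤ k!` the series may be integrated termwise against `p`: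
`v(t) = ∑ₖ M_k tᵏ⁺¹ / (k! (k+1)!)` for `t ≥ 0`, an everywhere convergent power series. Its sum
is the analytic extension of `v`, and the derivatives of `V = t - log (1 + v)` at `0` come from
the Leibniz rule applied to `(1 + v) · (log (1 + v))' = v'`. Finally
`V_ε'(0) = 1 - ∫ p(s) e^{-(1+ε)s} ds`, which is differentiated in `ε` under the integral sign.
-/

open Real Nat

lemma pow_mul_exp_neg_mul_le {a s : ℝ} (ha : 0 < a) (hs : 0 ≤ s) (k : ℕ) :
    s ^ k * exp (-(a * s)) ≤ k ! / a ^ k := by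
  have h := pow_div_factorial_le_exp (a * s) (by positivity) k
  rw [div_le_iff₀ (by positivity)] at h
  rw [le_div_iff₀ (by positivity)]
  calc s ^ k * exp (-(a * s)) * a ^ k = (a * s) ^ k * exp (-(a * s)) := by ring
    _ ≤ exp (a * s) * k ! * exp (-(a * s)) := by gcongr
    _ = k ! := by rw [mul_comm (exp _), mul_assoc, ← exp_add, add_neg_cancel, exp_zero, mul_one]

lemma iteratedDeriv_ofScalarsSum_zero {𝕜 : Type*} [NontriviallyNormedField 𝕜] [CompleteSpace 𝕜]
    [CharZero 𝕜] {c : ℕ → 𝕜} (hc : 0 < (FormalMultilinearSeries.ofScalars 𝕜 c).radius) (n : ℕ) :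
    iteratedDeriv n (FormalMultilinearSeries.ofScalarsSum c) 0 = n ! * c n := by
  have h := ((FormalMultilinearSeries.ofScalars 𝕜 c).hasFPowerSeriesOnBall hc).hasFPowerSeriesAt
  have hcoeff := congrFun (FormalMultilinearSeries.ofScalars_series_injective 𝕜 𝕜
    (h.analyticAt.hasFPowerSeriesAt.eq_formalMultilinearSeries h)) n
  rw [← hcoeff, mul_div_cancel₀ _ (by exact_mod_cast n.factorial_ne_zero)]
  rfl

lemma sqrt_div_mul_besselI1 {s t : ℝ} (hs : 0 < s) (ht : 0 ≤ t) :
    √(t / s) * besselI1 (2 * √(s * t)) = ∑' k : ℕ, s ^ k * t ^ (k + 1) / (k ! * (k + 1)!) := by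
  rw [besselI1, ← tsum_mul_left]
  congr 1 with k
  have hst : √(t / s) * √(s * t) = t := by
    rw [← sqrt_mul (div_nonneg ht hs.le), div_mul_eq_mul_div, mul_left_comm,
      mul_div_cancel_left₀ _ hs.ne', sqrt_mul_self ht]
  rw [mul_div_cancel_left₀ _ two_ne_zero, pow_succ, pow_mul, sq_sqrt (mul_nonneg hs.le ht)]
  calc √(t / s) * (1 / (k ! * (k + 1)!) * ((s * t) ^ k * √(s * t)))
      = (√(t / s) * √(s * t)) * ((s * t) ^ k / (k ! * (k + 1)!)) := by ring
    _ = _ := by rw [hst, mul_pow]; ring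

lemma sum_choose_mul_iteratedDeriv_mul_iteratedDeriv_log {f : ℝ → ℝ} {x : ℝ}
    (hf : AnalyticAt ℝ f x) (hx : 0 < f x) (n : ℕ) :
    ∑ i ∈ Finset.range (n + 1), n.choose i * iteratedDeriv i f x *
      iteratedDeriv (n - i + 1) (fun t => log (f t)) x = iteratedDeriv (n + 1) f x := by
  have hlog : AnalyticAt ℝ (fun t => log (f t)) x := hf.log hx
  -- Differentiate `f · (log ∘ f)' = f'` `n` times with the Leibniz rule.
  have heq : f * deriv (fun t => log (f t)) =ᶠ[𝓝 x] deriv f := by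
    filter_upwards [hf.eventually_analyticAt, hf.continuousAt.eventually_ne hx.ne'] with t ht hft
    rw [Pi.mul_apply, deriv.log ht.differentiableAt hft, mul_div_cancel₀ _ hft]
  rw [iteratedDeriv_succ', ← heq.iteratedDeriv_eq, iteratedDeriv_mul hf.contDiffAt
    hlog.deriv.contDiffAt]
  simp_rw [← iteratedDeriv_succ']

lemma iteratedDeriv_log_one_add {g : ℝ → ℝ} (hg : AnalyticAt ℝ g 0) (hg0 : g 0 = 0) :
    deriv (fun t => log (1 + g t)) 0 = deriv g 0 ∧
    iteratedDeriv 2 (fun t => log (1 + g t)) 0 = iteratedDeriv 2 g 0 - deriv g 0 ^ 2 ∧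
    iteratedDeriv 3 (fun t => log (1 + g t)) 0 =
      iteratedDeriv 3 g 0 - 3 * deriv g 0 * iteratedDeriv 2 g 0 + 2 * deriv g 0 ^ 3 := by
  have hf : AnalyticAt ℝ (fun t => 1 + g t) 0 := analyticAt_const.add hg
  have hf0 : 0 < 1 + g 0 := by simp [hg0]
  have hleib := sum_choose_mul_iteratedDeriv_mul_iteratedDeriv_log hf hf0
  have h0 := hleib 0
  have h1 := hleib 1
  have h2 := hleib 2
  have hd (k : ℕ) : iteratedDeriv (k + 1) (fun t => 1 + g t) 0 = iteratedDeriv (k + 1) g 0 :=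
    iteratedDeriv_const_add k.succ_pos 1
  norm_num [Finset.sum_range_succ, hd, hg0, iteratedDeriv_one] at h0 h1 h2
  refine ⟨h0, by linear_combination h1 - deriv g 0 * h0, ?_⟩
  linear_combination h2 - 2 * deriv g 0 * h1 + (2 * deriv g 0 ^ 2 - iteratedDeriv 2 g 0) * h0

section

variable {p : ℝ → ℝ}

lemma norm_moment_integrand_le {s : ℝ} (hs : 0 ≤ s) (k : ℕ) :
    ‖p s * exp (-s) * s ^ k‖ ≤ k ! * |p s| := by
  have h := pow_mul_exp_neg_mul_le one_pos hs k
  rw [one_mul, one_pow, div_one] at h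
  calc ‖p s * exp (-s) * s ^ k‖ = |p s| * (s ^ k * exp (-s)) := by
        rw [norm_mul, norm_mul, Real.norm_eq_abs, norm_of_nonneg (exp_pos _).le,
          norm_of_nonneg (pow_nonneg hs k)]
        ring
    _ ≤ |p s| * k ! := by gcongr
    _ = k ! * |p s| := mul_comm _ _

lemma integrableOn_moment_integrand (hp : IntegrableOn p (Ioi 0)) (k : ℕ) :
    IntegrableOn (fun s => p s * exp (-s) * s ^ k) (Ioi 0) := by
  have hp_meas := hp.aestronglyMeasurable
  exact Integrable.mono' (hp.norm.const_mul (k ! : ℝ)) (by fun_prop)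
    ((ae_restrict_iff' measurableSet_Ioi).2 <| .of_forall fun s hs =>
      norm_moment_integrand_le (le_of_lt hs) k)

lemma integral_norm_moment_integrand_le (hp : IntegrableOn p (Ioi 0)) (k : ℕ) :
    ∫ s in Ioi 0, ‖p s * exp (-s) * s ^ k‖ ≤ k ! * ∫ s in Ioi 0, |p s| := by
  rw [← integral_const_mul]
  exact setIntegral_mono_on (integrableOn_moment_integrand hp k).norm
    (hp.norm.const_mul _) measurableSet_Ioi fun s hs => norm_moment_integrand_le (le_of_lt hs) k

lemma abs_moment_le (hp : IntegrableOn p (Ioi 0)) (k : ℕ) :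
    |moment p k| ≤ k ! * ∫ s in Ioi 0, |p s| :=
  (norm_integral_le_integral_norm _).trans (integral_norm_moment_integrand_le hp k)

noncomputable def vCoeff (p : ℝ → ℝ) : ℕ → ℝ
  | 0 => 0
  | k + 1 => moment p k / (k ! * (k + 1)!)

noncomputable def vExt (p : ℝ → ℝ) : ℝ → ℝ :=
  FormalMultilinearSeries.ofScalarsSum (vCoeff p)

lemma abs_vCoeff_le (hp : IntegrableOn p (Ioi 0)) (n : ℕ) :
    |vCoeff p n| ≤ (∫ s in Ioi 0, |p s|) / n ! := by
  have hC : 0 ≤ ∫ s in Ioi 0, |p s| := integral_nonneg fun s => abs_nonneg _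
  cases n with
  | zero => simpa [vCoeff] using hC
  | succ k =>
    rw [vCoeff, abs_div, abs_of_pos (a := (k ! * (k + 1)! : ℝ)) (by positivity),
      div_le_div_iff₀ (by positivity) (by positivity)]
    calc |moment p k| * (k + 1)! ≤ k ! * (∫ s in Ioi 0, |p s|) * (k + 1)! := by
          gcongr; exact abs_moment_le hp k
      _ = (∫ s in Ioi 0, |p s|) * (k ! * (k + 1)!) := by ring

lemma summable_vCoeff_mul_pow (hp : IntegrableOn p (Ioi 0)) (t : ℝ) :
    Summable fun n => vCoeff p n * t ^ n := by
  refine .of_norm_bounded ((summable_pow_div_factorial |t|).mul_left (∫ s in Ioi 0, |p s|))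
    fun n => ?_
  calc ‖vCoeff p n * t ^ n‖ = |vCoeff p n| * |t| ^ n := by
        rw [norm_mul, norm_pow, Real.norm_eq_abs, Real.norm_eq_abs]
    _ ≤ (∫ s in Ioi 0, |p s|) / n ! * |t| ^ n := by gcongr; exact abs_vCoeff_le hp n
    _ = (∫ s in Ioi 0, |p s|) * (|t| ^ n / n !) := by ring

lemma radius_ofScalars_vCoeff (hp : IntegrableOn p (Ioi 0)) :
    (FormalMultilinearSeries.ofScalars ℝ (vCoeff p)).radius = ⊤ :=
  FormalMultilinearSeries.radius_eq_top_of_summable_norm _ fun r => by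
    simpa [FormalMultilinearSeries.ofScalars_norm, abs_mul] using
      (summable_vCoeff_mul_pow hp r).norm

lemma analyticAt_vExt (hp : IntegrableOn p (Ioi 0)) (t : ℝ) : AnalyticAt ℝ (vExt p) t := by
  have hr := radius_ofScalars_vCoeff hp
  exact ((FormalMultilinearSeries.ofScalars ℝ (vCoeff p)).hasFPowerSeriesOnBall
    (by simp [hr])).analyticAt_of_mem (by simp [hr])

lemma vExt_zero : vExt p 0 = 0 := by
  simp [vExt, FormalMultilinearSeries.ofScalarsSum_zero, vCoeff]

lemma iteratedDeriv_succ_vExt_zero (hp : IntegrableOn p (Ioi 0)) (k : ℕ) :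
    iteratedDeriv (k + 1) (vExt p) 0 = moment p k / k ! := by
  rw [vExt, iteratedDeriv_ofScalarsSum_zero (by simp [radius_ofScalars_vCoeff hp]), vCoeff]
  field_simp

lemma deriv_vExt_zero (hp : IntegrableOn p (Ioi 0)) : deriv (vExt p) 0 = moment p 0 := by
  simpa using iteratedDeriv_succ_vExt_zero hp 0

lemma iteratedDeriv_two_vExt_zero (hp : IntegrableOn p (Ioi 0)) :
    iteratedDeriv 2 (vExt p) 0 = moment p 1 := by
  simpa using iteratedDeriv_succ_vExt_zero hp 1

lemma vFun_eq_vExt (hp : IntegrableOn p (Ioi 0)) {t : ℝ} (ht : 0 ≤ t) : vFun p t = vExt p t := by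
  set f : ℕ → ℝ → ℝ := fun k s => p s * exp (-s) * s ^ k * (t ^ (k + 1) / (k ! * (k + 1)!))
  have hf_int (k : ℕ) : Integrable (f k) (volume.restrict (Ioi 0)) :=
    (integrableOn_moment_integrand hp k).mul_const _
  have hf_integral (k : ℕ) : ∫ s in Ioi 0, f k s = vCoeff p (k + 1) * t ^ (k + 1) := by
    rw [integral_mul_const, vCoeff, moment]
    ring
  have hf_norm (k : ℕ) :
      ∫ s in Ioi 0, ‖f k s‖ ≤ (∫ s in Ioi 0, |p s|) * (t ^ (k + 1) / (k + 1)!) := by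
    have hc : 0 ≤ t ^ (k + 1) / (k ! * (k + 1)! : ℝ) := by positivity
    simp_rw [f, norm_mul (_ * _ * _), norm_of_nonneg hc]
    rw [integral_mul_const]
    calc (∫ s in Ioi 0, ‖p s * exp (-s) * s ^ k‖) * (t ^ (k + 1) / (k ! * (k + 1)!))
        ≤ k ! * (∫ s in Ioi 0, |p s|) * (t ^ (k + 1) / (k ! * (k + 1)!)) := by
          gcongr; exact integral_norm_moment_integrand_le hp k
      _ = (∫ s in Ioi 0, |p s|) * (t ^ (k + 1) / (k + 1)!) := by field_simp
  have hsummable : Summable fun k => ∫ s in Ioi 0, ‖f k s‖ :=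
    .of_nonneg_of_le (fun k => integral_nonneg fun s => norm_nonneg _) hf_norm
      (((summable_pow_div_factorial t).comp_injective succ_injective).mul_left _)
  have hpointwise : EqOn (fun s => p s * exp (-s) * √(t / s) * besselI1 (2 * √(s * t)))
      (fun s => ∑' k, f k s) (Ioi 0) := fun s hs => by
    dsimp only
    rw [mul_assoc _ √(t / s), sqrt_div_mul_besselI1 hs ht, ← tsum_mul_left]
    congr 1 with k
    simp only [f]
    ring
  rw [vFun, setIntegral_congr_fun measurableSet_Ioi hpointwise,
    ← integral_tsum_of_summable_integral_norm hf_int hsummable]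
  simp_rw [hf_integral, vExt, FormalMultilinearSeries.ofScalars_sum_eq, smul_eq_mul]
  rw [(summable_vCoeff_mul_pow hp t).tsum_eq_zero_add, vCoeff.eq_1, zero_mul, zero_add]

noncomputable def VExt (p : ℝ → ℝ) : ℝ → ℝ := fun t => t - log (1 + vExt p t)

lemma analyticAt_log_one_add_vExt (hp : IntegrableOn p (Ioi 0)) :
    AnalyticAt ℝ (fun t => log (1 + vExt p t)) 0 :=
  (analyticAt_const.add (analyticAt_vExt hp 0)).log (by simp [vExt_zero])

lemma analyticAt_VExt (hp : IntegrableOn p (Ioi 0)) : AnalyticAt ℝ (VExt p) 0 :=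
  analyticAt_id.sub (analyticAt_log_one_add_vExt hp)

lemma VExt_zero : VExt p 0 = 0 := by simp [VExt, vExt_zero]

lemma VExt_eq_VFun (hp : IntegrableOn p (Ioi 0)) {t : ℝ} (ht : 0 ≤ t) : VExt p t = VFun p t := by
  rw [VExt, VFun, vFun_eq_vExt hp ht]

lemma iteratedDeriv_VExt_zero (hp : IntegrableOn p (Ioi 0)) (k : ℕ) :
    iteratedDeriv k (VExt p) 0 =
      (if k = 1 then 1 else 0) - iteratedDeriv k (fun t => log (1 + vExt p t)) 0 := by
  unfold VExt
  rw [iteratedDeriv_fun_sub (f := fun t => t) contDiffAt_id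
      (analyticAt_log_one_add_vExt hp).contDiffAt,
    iteratedDeriv_fun_id_zero]

lemma deriv_VExt_zero (hp : IntegrableOn p (Ioi 0)) : deriv (VExt p) 0 = 1 - moment p 0 := by
  rw [← iteratedDeriv_one, iteratedDeriv_VExt_zero hp, iteratedDeriv_one,
    (iteratedDeriv_log_one_add (analyticAt_vExt hp 0) vExt_zero).1, deriv_vExt_zero hp]
  simp

lemma iteratedDeriv_two_VExt_zero (hp : IntegrableOn p (Ioi 0)) :
    iteratedDeriv 2 (VExt p) 0 = moment p 0 ^ 2 - moment p 1 := by
  rw [iteratedDeriv_VExt_zero hp, (iteratedDeriv_log_one_add (analyticAt_vExt hp 0) vExt_zero).2.1,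
    deriv_vExt_zero hp, iteratedDeriv_two_vExt_zero hp]
  simp

lemma iteratedDeriv_three_VExt_zero (hp : IntegrableOn p (Ioi 0)) :
    iteratedDeriv 3 (VExt p) 0 =
      -(1 / 2) * moment p 2 + 3 * moment p 1 * moment p 0 - 2 * moment p 0 ^ 3 := by
  rw [iteratedDeriv_VExt_zero hp, (iteratedDeriv_log_one_add (analyticAt_vExt hp 0) vExt_zero).2.2,
    deriv_vExt_zero hp, iteratedDeriv_two_vExt_zero hp, iteratedDeriv_succ_vExt_zero hp 2]
  norm_num
  ring

lemma derivWithin_VFun_zero (hp : IntegrableOn p (Ioi 0)) :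
    derivWithin (VFun p) (Ici 0) 0 = 1 - moment p 0 := by
  have hev : VFun p =ᶠ[𝓝[Ici 0] 0] VExt p :=
    eventually_nhdsWithin_of_forall fun t ht => (VExt_eq_VFun hp ht).symm
  rw [hev.derivWithin_eq (VExt_eq_VFun hp le_rfl).symm,
    (analyticAt_VExt hp).differentiableAt.derivWithin (uniqueDiffOn_Ici 0 0 self_mem_Ici)]
  exact deriv_VExt_zero hp

lemma integrableOn_mul_exp_neg_mul (hp : IntegrableOn p (Ioi 0)) {ε : ℝ} (hε : 0 ≤ ε) :
    IntegrableOn (fun s => p s * exp (-ε * s)) (Ioi 0) :=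
  hp.mul_bdd (by fun_prop : Continuous fun s : ℝ => exp (-ε * s)).aestronglyMeasurable
    ((ae_restrict_iff' measurableSet_Ioi).2 <| .of_forall fun s (hs : 0 < s) => by
      rw [norm_of_nonneg (exp_pos _).le, exp_le_one_iff]
      nlinarith)

lemma hasDerivAt_moment_mul_exp (hp : IntegrableOn p (Ioi 0)) (k : ℕ) :
    HasDerivAt (fun ε => moment (fun s => p s * exp (-ε * s)) k) (-moment p (k + 1)) 0 := by
  set F' : ℝ → ℝ → ℝ := fun ε s => -(p s * exp (-ε * s) * exp (-s) * s ^ (k + 1))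
  have hF'_integral : ∫ s in Ioi 0, F' 0 s = -moment p (k + 1) := by
    simp [F', moment, integral_neg]
  have h_bound : ∀ᵐ s ∂volume.restrict (Ioi 0), ∀ ε ∈ Metric.ball (0 : ℝ) (1 / 2),
      ‖F' ε s‖ ≤ (k + 1)! / (1 / 2) ^ (k + 1) * |p s| := by
    refine (ae_restrict_iff' measurableSet_Ioi).2 (.of_forall fun s (hs : 0 < s) ε hε => ?_)
    have hε' : |ε| < 1 / 2 := by simpa using hε
    have hexp : exp (-ε * s) * exp (-s) ≤ exp (-(1 / 2 * s)) := by
      rw [← exp_add]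
      gcongr
      nlinarith [abs_lt.1 hε']
    calc ‖F' ε s‖ = |p s| * (s ^ (k + 1) * (exp (-ε * s) * exp (-s))) := by
          simp only [F', norm_neg, norm_mul, Real.norm_eq_abs, abs_of_pos (exp_pos _),
            abs_of_pos (pow_pos hs _)]
          ring
      _ ≤ |p s| * (s ^ (k + 1) * exp (-(1 / 2 * s))) := by gcongr
      _ ≤ |p s| * ((k + 1)! / (1 / 2) ^ (k + 1)) := by
          gcongr; exact pow_mul_exp_neg_mul_le (by norm_num) hs.le (k + 1)
      _ = _ := mul_comm _ _
  have h_diff : ∀ᵐ s ∂volume.restrict (Ioi 0), ∀ ε ∈ Metric.ball (0 : ℝ) (1 / 2),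
      HasDerivAt (fun ε => p s * exp (-ε * s) * exp (-s) * s ^ k) (F' ε s) ε := by
    refine .of_forall fun s ε _ => ?_
    have hlin : HasDerivAt (fun ε : ℝ => -ε * s) (-s) ε := by
      simpa using (hasDerivAt_neg ε).mul_const s
    exact (((hlin.exp.const_mul (p s)).mul_const (exp (-s))).mul_const (s ^ k)).congr_deriv
      (by simp only [F']; ring)
  have hp_meas := hp.aestronglyMeasurable
  have h := hasDerivAt_integral_of_dominated_loc_of_deriv_le
    (F := fun ε s => p s * exp (-ε * s) * exp (-s) * s ^ k)
    (Metric.ball_mem_nhds 0 one_half_pos) (.of_forall fun ε => by fun_prop)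
    (by simpa [IntegrableOn] using integrableOn_moment_integrand hp k) (by fun_prop) h_bound
    (hp.norm.const_mul _) h_diff
  rw [← hF'_integral]
  exact h.2

end

theorem stmt3_general (p : ℝ → ℝ) (hint : IntegrableOn p (Set.Ioi 0)) :
    -- `v` extends real-analytically at `0`, with the stated derivatives at `0`
    (∃ vext : ℝ → ℝ, AnalyticAt ℝ vext 0 ∧
      (∀ᶠ t in nhdsWithin (0 : ℝ) (Set.Ici 0), vext t = vFun p t) ∧
      vext 0 = 0 ∧ deriv vext 0 = moment p 0 ∧ iteratedDeriv 2 vext 0 = moment p 1 ∧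
      (∀ k : ℕ, 1 ≤ k →
        iteratedDeriv k vext 0 = moment p (k - 1) / (Nat.factorial (k - 1) : ℝ))) ∧
    -- `V` extends real-analytically at `0`, with the stated derivatives at `0`
    (∃ Vext : ℝ → ℝ, AnalyticAt ℝ Vext 0 ∧
      (∀ᶠ t in nhdsWithin (0 : ℝ) (Set.Ici 0), Vext t = VFun p t) ∧
      Vext 0 = 0 ∧ deriv Vext 0 = 1 - moment p 0 ∧
      iteratedDeriv 2 Vext 0 = (moment p 0) ^ 2 - moment p 1 ∧
      iteratedDeriv 3 Vext 0 =
        -(1 / 2) * moment p 2 + 3 * moment p 1 * moment p 0 - 2 * (moment p 0) ^ 3) ∧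
    -- the derivative at `ε = 0` of `ε ↦ V_ε'(0)` equals `M₁`
    HasDerivWithinAt
      (fun ε : ℝ =>
        derivWithin (VFun (fun s => p s * Real.exp (-ε * s))) (Set.Ici 0) 0)
      (moment p 1) (Set.Ici 0) 0 := by
  refine ⟨⟨vExt p, analyticAt_vExt hint 0,
      eventually_nhdsWithin_of_forall fun t ht => (vFun_eq_vExt hint ht).symm, vExt_zero,
      deriv_vExt_zero hint, iteratedDeriv_two_vExt_zero hint, fun k hk => ?_⟩,
    ⟨VExt p, analyticAt_VExt hint,
      eventually_nhdsWithin_of_forall fun t ht => VExt_eq_VFun hint ht, VExt_zero,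
      deriv_VExt_zero hint, iteratedDeriv_two_VExt_zero hint,
      iteratedDeriv_three_VExt_zero hint⟩, ?_⟩
  · obtain ⟨k, rfl⟩ := Nat.exists_eq_add_of_le' hk
    simpa using iteratedDeriv_succ_vExt_zero hint k
  · have h := ((hasDerivAt_moment_mul_exp hint 0).const_sub 1).hasDerivWithinAt (s := Ici 0)
    rw [neg_neg] at h
    exact h.congr (fun ε hε => derivWithin_VFun_zero (integrableOn_mul_exp_neg_mul hint hε))
      (derivWithin_VFun_zero (integrableOn_mul_exp_neg_mul hint le_rfl))

theorem stmt3 (p : ℝ → ℝ) (hmeas : Measurable p) (hpos : ∀ s, 0 ≤ s → 0 ≤ p s)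
    (hint : IntegrableOn p (Set.Ioi 0)) :
    -- `v` extends real-analytically at `0`, with the stated derivatives at `0`
    (∃ vext : ℝ → ℝ, AnalyticAt ℝ vext 0 ∧
      (∀ᶠ t in nhdsWithin (0 : ℝ) (Set.Ici 0), vext t = vFun p t) ∧
      vext 0 = 0 ∧ deriv vext 0 = moment p 0 ∧ iteratedDeriv 2 vext 0 = moment p 1 ∧
      (∀ k : ℕ, 1 ≤ k →
        iteratedDeriv k vext 0 = moment p (k - 1) / (Nat.factorial (k - 1) : ℝ))) ∧
    -- `V` extends real-analytically at `0`, with the stated derivatives at `0`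
    (∃ Vext : ℝ → ℝ, AnalyticAt ℝ Vext 0 ∧
      (∀ᶠ t in nhdsWithin (0 : ℝ) (Set.Ici 0), Vext t = VFun p t) ∧
      Vext 0 = 0 ∧ deriv Vext 0 = 1 - moment p 0 ∧
      iteratedDeriv 2 Vext 0 = (moment p 0) ^ 2 - moment p 1 ∧
      iteratedDeriv 3 Vext 0 =
        -(1 / 2) * moment p 2 + 3 * moment p 1 * moment p 0 - 2 * (moment p 0) ^ 3) ∧
    -- the derivative at `ε = 0` of `ε ↦ V_ε'(0)` equals `M₁`
    HasDerivWithinAt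
      (fun ε : ℝ =>
        derivWithin (VFun (fun s => p s * Real.exp (-ε * s))) (Set.Ici 0) 0)
      (moment p 1) (Set.Ici 0) 0 :=
  stmt3_general p hint
end
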